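/- arXiv:1903.10435 — 6 statements merged into one kernel-verified Lean document; each statement's English description precedes it below -/
import Mathlib

section
/- If a(x) and b(x) are formal power series with constant term 1 satisfying b(x·a(x)) = a(x), then for all m ≥ 1 and n ≥ 0, the coefficient of x^n in (1 + x·(log a(x))')·a(x)^m equals the coefficient of x^n in b(x)^{m+n}, where 1 + x·(log a)' = 1 + x·a'(x)/a(x). -/
/-!
Substitution `f ↦ f(X a)` is a ring map, so `b(X a) = a` gives `aᵐ = bᵐ(X a)`, i.e.
`[xⁿ] aᵐ = ∑ₖ [xᵏ] bᵐ · [xⁿ⁻ᵏ] aᵏ`. Write `θ = X d/dX`, so that `[xⁿ] θ f = n [xⁿ] f`. By strong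
induction on `n`, the induction hypothesis `k [xⁿ⁻ᵏ] bⁿ = n [xⁿ⁻ᵏ] aᵏ` turns `n [xⁿ] aᵐ` into
`[xⁿ] (θ(bᵐ) bⁿ)`, and `(m + n) θ(bᵐ) bⁿ = m θ(bᵐ⁺ⁿ)` then yields
`m [xⁿ] bᵐ⁺ⁿ = (m + n) [xⁿ] aᵐ`. Finally `m (1 + X a'/a) aᵐ = m aᵐ + θ(aᵐ)`, whose `n`-th
coefficient is `(m + n) [xⁿ] aᵐ`.
-/

open PowerSeries Finset

namespace PowerSeries

section CommRing

variable {R : Type*} [CommRing R]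

theorem coeff_X_mul_derivative (f : R⟦X⟧) (n : ℕ) :
    coeff n (X * d⁄dX R f) = n * coeff n f := by
  cases n with
  | zero => simp
  | succ n => rw [coeff_succ_X_mul, coeff_derivative, mul_comm]; push_cast; rfl

theorem coeff_X_mul_derivative_mul (f g : R⟦X⟧) (n : ℕ) :
    coeff n (X * d⁄dX R f * g) = ∑ k ∈ range (n + 1), k * coeff k f * coeff (n - k) g := by
  rw [coeff_mul, Nat.sum_antidiagonal_eq_sum_range_succ_mk]
  simp only [coeff_X_mul_derivative]

theorem coeff_subst_X_mul (f g : R⟦X⟧) (n : ℕ) :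
    coeff n (f.subst (X * g)) = ∑ k ∈ range (n + 1), coeff k f * coeff (n - k) (g ^ k) := by
  have hcoeff (k : ℕ) : coeff n ((X * g) ^ k) = if k ≤ n then coeff (n - k) (g ^ k) else 0 := by
    rw [mul_pow, coeff_X_pow_mul']
  rw [coeff_subst' (HasSubst.of_constantCoeff_zero' (by simp)),
    finsum_eq_finsetSum_of_support_subset (s := range (n + 1))]
  · refine sum_congr rfl fun k hk => ?_
    rw [hcoeff, if_pos (by simpa [Nat.lt_succ_iff] using hk), smul_eq_mul]
  · intro k hk
    by_contra hkn
    simp_all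

theorem X_mul_derivative_pow_mul_pow (f : R⟦X⟧) (m n : ℕ) :
    (m + n) • (X * d⁄dX R (f ^ m) * f ^ n) = m • (X * d⁄dX R (f ^ (m + n))) := by
  rcases m with _ | m
  · simp
  rw [derivative_pow, derivative_pow, Nat.add_sub_cancel, show m + 1 + n - 1 = m + n by omega,
    pow_add]
  simp only [nsmul_eq_mul]
  push_cast
  ring

theorem natCast_mul_coeff_pow_add_of_subst_X_mul_eq [IsDomain R] [CharZero R]
    {a b : R⟦X⟧} (hab : b.subst (X * a) = a) (n m : ℕ) :
    m * coeff n (b ^ (m + n)) = (m + n) * coeff n (a ^ m) := by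
  have hpow (m n : ℕ) :
      coeff n (a ^ m) = ∑ k ∈ range (n + 1), coeff k (b ^ m) * coeff (n - k) (a ^ k) := by
    rw [← coeff_subst_X_mul, subst_pow (HasSubst.of_constantCoeff_zero' (by simp)), hab]
  induction n using Nat.strong_induction_on generalizing m with
  | _ n ih =>
  rcases Nat.eq_zero_or_pos n with rfl | hn
  · simp [hpow m 0]
  have hterm : ∀ k ∈ range (n + 1),
      n * (coeff k (b ^ m) * coeff (n - k) (a ^ k)) = k * coeff k (b ^ m) * coeff (n - k) (b ^ n) := by
    intro k hk
    rcases Nat.eq_zero_or_pos k with rfl | hk0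
    · simp [coeff_one, hn.ne']
    have := ih (n - k) (by omega) k
    rw [← Nat.cast_add, Nat.add_sub_cancel' (by simpa [Nat.lt_succ_iff] using hk)] at this
    linear_combination (-coeff k (b ^ m)) * this
  have hcoeff := congrArg (coeff n) (X_mul_derivative_pow_mul_pow b m n)
  rw [map_nsmul, map_nsmul, coeff_X_mul_derivative, coeff_X_mul_derivative_mul,
    ← sum_congr rfl hterm, ← mul_sum, ← hpow] at hcoeff
  refine mul_left_cancel₀ (Nat.cast_ne_zero.2 hn.ne' : (n : R) ≠ 0) ?_
  linear_combination -hcoeff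

end CommRing

theorem nsmul_one_add_X_mul_derivative_mul_inv_mul_pow {K : Type*} [Field K] {a : K⟦X⟧}
    (ha : constantCoeff a ≠ 0) (m : ℕ) :
    m • ((1 + X * d⁄dX K a * a⁻¹) * a ^ m) = m • a ^ m + X * d⁄dX K (a ^ m) := by
  rcases m with _ | m
  · simp
  rw [derivative_pow, pow_succ]
  simp only [nsmul_eq_mul]
  push_cast
  linear_combination ((m + 1) * X * d⁄dX K a * a ^ m) * PowerSeries.mul_inv_cancel a ha

end PowerSeries

theorem stmt4_general (K : Type*) [Field K] [CharZero K] (a b : PowerSeries K)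
    (ha : constantCoeff a = 1)
    (hcomp : ∀ n : ℕ, coeff n a
      = ∑ m ∈ Finset.range (n + 1), coeff m b * coeff (n - m) (a ^ m)) :
    ∀ m n : ℕ, 1 ≤ m →
      coeff n ((1 + X * a.derivativeFun * a⁻¹) * a ^ m) = coeff n (b ^ (m + n)) := by
  intro m n hm
  have hab : b.subst (X * a) = a := by
    ext n
    rw [coeff_subst_X_mul, hcomp]
  have hlog := congrArg (coeff n)
    (nsmul_one_add_X_mul_derivative_mul_inv_mul_pow (a := a) (by simp [ha]) m)
  rw [map_nsmul, map_add, map_nsmul, coeff_X_mul_derivative, nsmul_eq_mul, nsmul_eq_mul] at hlog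
  refine mul_left_cancel₀ (Nat.cast_ne_zero.2 (by omega) : (m : K) ≠ 0) ?_
  rw [natCast_mul_coeff_pow_add_of_subst_X_mul_eq hab]
  change (m : K) * coeff n ((1 + X * d⁄dX K a * a⁻¹) * a ^ m) = _
  linear_combination hlog

/-- If `a(0) = b(0) = 1` and `b(x·a(x)) = a(x)` (coefficientwise), then
`[xⁿ] (1 + x(log a)') aᵐ = [xⁿ] b^{m+n}`, where `(log a)' = a'/a`. -/
theorem stmt4 (K : Type*) [Field K] [CharZero K] (a b : PowerSeries K)
    (ha : constantCoeff a = 1) (hb : constantCoeff b = 1)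
    (hcomp : ∀ n : ℕ, coeff n a
      = ∑ m ∈ Finset.range (n + 1), coeff m b * coeff (n - m) (a ^ m)) :
    ∀ m n : ℕ, 1 ≤ m →
      coeff n ((1 + X * a.derivativeFun * a⁻¹) * a ^ m) = coeff n (b ^ (m + n)) :=
  stmt4_general K a b ha hcomp
end

section
/- Let b(x) = φx + √(1 + (φ² − β)x²) be the formal power series whose square-root factor is the formal square root of 1 + (φ² − β)x² with constant term 1. Then for every n ≥ 1 there exist polynomials t_n(x) of degree ≤ n and u_n(x) of degree < n such that b(x)^n = t_n(x) + u_n(x)·√(1 + (φ² − β)x²), and moreover b(x)^{2n} − 2t_n(x)·b(x)^n + (βx² − 1)^n = 0. -/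
/-!
Multiplying by `p + s`, where `s² = q`, acts on `t + u s` by `(t, u) ↦ (p t + u q, t + p u)`, and the
same recursion describes multiplication of `t - u s` by the conjugate `p - s`. So with `p = φx` and
`q = 1 + (φ² - β)x²` one gets `bⁿ = t + u s` and `b̄ⁿ = t - u s` for `b̄ = φx - s`, where
`b b̄ = βx² - 1`; hence `b²ⁿ - 2t bⁿ + (b b̄)ⁿ = bⁿ (bⁿ + b̄ⁿ - 2t) = 0`.
-/

open PowerSeries
open scoped Polynomial

namespace Polynomial

variable {R : Type*} [CommRing R] {p q t u : R[X]} {n : ℕ}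

lemma degree_mul_add_mul_le (hp : p.degree ≤ 1) (hq : q.degree ≤ 2) (ht : t.degree ≤ n)
    (hu : u.degree < n) : (p * t + u * q).degree ≤ ↑(n + 1) := by
  refine degree_add_le_of_degree_le ?_ ?_
  · grw [degree_mul_le, hp, ht, add_comm]
    rfl
  · grw [degree_mul_le, hq, ← one_add_one_eq_two, ← add_assoc, Nat.WithBot.add_one_le_of_lt hu]
    rfl

lemma degree_add_mul_lt (hp : p.degree ≤ 1) (ht : t.degree ≤ n) (hu : u.degree < n) :
    (t + p * u).degree < ↑(n + 1) := by
  refine (degree_add_le_of_degree_le ht ?_).trans_lt (by exact_mod_cast n.lt_succ_self)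
  grw [degree_mul_le, hp, add_comm, Nat.WithBot.add_one_le_of_lt hu]

end Polynomial

theorem exists_pow_add_sqrt_and_pow_sub_sqrt {R : Type*} [CommRing R] {p q : R[X]}
    (hp : p.degree ≤ 1) (hq : q.degree ≤ 2) {s : R⟦X⟧} (hs : s ^ 2 = q) (n : ℕ) :
    ∃ t u : R[X], t.degree ≤ n ∧ u.degree < n ∧
      ((p : R⟦X⟧) + s) ^ n = t + u * s ∧ ((p : R⟦X⟧) - s) ^ n = t - u * s := by
  induction n with
  | zero => exact ⟨1, 0, Polynomial.degree_one_le, by simp, by simp, by simp⟩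
  | succ n ih =>
    obtain ⟨t, u, ht, hu, hplus, hminus⟩ := ih
    refine ⟨p * t + u * q, t + p * u, Polynomial.degree_mul_add_mul_le hp hq ht hu,
      Polynomial.degree_add_mul_lt hp ht hu, ?_, ?_⟩
    · push_cast
      linear_combination ((p : R⟦X⟧) + s) * hplus + (u : R⟦X⟧) * hs
    · push_cast
      linear_combination ((p : R⟦X⟧) - s) * hminus + (u : R⟦X⟧) * hs

theorem stmt6_general (φ β : ℝ) (s : PowerSeries ℝ)
    (hs : s ^ 2 = 1 + C (φ ^ 2 - β) * X ^ 2)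
    (b : PowerSeries ℝ) (hb : b = C φ * X + s) :
    ∀ n : ℕ, 1 ≤ n → ∃ t u : Polynomial ℝ,
      t.degree ≤ (n : ℕ) ∧ u.degree < (n : ℕ) ∧
      b ^ n = (t : PowerSeries ℝ) + (u : PowerSeries ℝ) * s ∧
      b ^ (2 * n) - 2 * (t : PowerSeries ℝ) * b ^ n + (C β * X ^ 2 - 1) ^ n = 0 := by
  intro n _
  have hq : s ^ 2 = ((1 + Polynomial.C (φ ^ 2 - β) * Polynomial.X ^ 2 : ℝ[X]) : ℝ⟦X⟧) := by
    simp [hs]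
  obtain ⟨t, u, ht, hu, hplus, hminus⟩ := exists_pow_add_sqrt_and_pow_sub_sqrt
    (Polynomial.degree_C_mul_X_le φ) (by compute_degree) hq n
  simp only [Polynomial.coe_mul, Polynomial.coe_C, Polynomial.coe_X, ← hb] at hplus hminus
  have hnorm : b * (C φ * X - s) = C β * X ^ 2 - 1 := by
    rw [map_sub, map_pow] at hs
    rw [hb]
    linear_combination -hs
  refine ⟨t, u, ht, hu, hplus, ?_⟩
  rw [← hnorm, mul_pow, hminus, mul_comm 2 n, pow_mul]
  linear_combination b ^ n * hplus

/-- With `b(x) = φx + √(1 + (φ²-β)x²)` (formal square root with constant term 1),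
for every `n ≥ 1` there are polynomials `t` of degree ≤ n and `u` of degree < n with
`bⁿ = t + u·√(1+(φ²-β)x²)` and `b^{2n} - 2t·bⁿ + (βx²-1)ⁿ = 0`. -/
theorem stmt6 (φ β : ℝ) (s : PowerSeries ℝ) (hs0 : constantCoeff s = 1)
    (hs : s ^ 2 = 1 + C (φ ^ 2 - β) * X ^ 2)
    (b : PowerSeries ℝ) (hb : b = C φ * X + s) :
    ∀ n : ℕ, 1 ≤ n → ∃ t u : Polynomial ℝ,
      t.degree ≤ (n : ℕ) ∧ u.degree < (n : ℕ) ∧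
      b ^ n = (t : PowerSeries ℝ) + (u : PowerSeries ℝ) * s ∧
      b ^ (2 * n) - 2 * (t : PowerSeries ℝ) * b ^ n + (C β * X ^ 2 - 1) ^ n = 0 :=
  stmt6_general φ β s hs b hb
end

section
/- For all n ≥ 1, ((x+1)^n − (x−1)^n)/2 = n·∏_{m=1}^{n−1}(x + i·cot(mπ/n)) as polynomials in ℂ[x]. -/
/-!
With `ω = exp(2πi/n)`, `aⁿ - bⁿ = ∏_{k<n} (a - ωᵏ b)` for `a = x + 1`, `b = x - 1`. The factor
`k = 0` is `2`; for `1 ≤ k < n` the factor is `(1 - ωᵏ)(x + i·cot(kπ/n))`, because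
`i·cot θ = (1 + e^{2iθ}) / (1 - e^{2iθ})`; and `∏_{1 ≤ k < n} (1 - ωᵏ) = n`.
-/

open Polynomial Finset Complex Real

namespace IsPrimitiveRoot

variable {R : Type*} [CommRing R] [IsDomain R] {n : ℕ} {ζ : R}

theorem pow_sub_pow_eq_prod_range (hζ : IsPrimitiveRoot ζ n) (hn : 0 < n) (a b : R) :
    a ^ n - b ^ n = ∏ k ∈ range n, (a - ζ ^ k * b) := by
  simpa [eval_prod] using congrArg (eval a) (X_pow_sub_C_eq_prod hζ hn (rfl : b ^ n = b ^ n))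

theorem prod_Ico_one_sub_pow (hζ : IsPrimitiveRoot ζ n) (hn : 0 < n) :
    ∏ k ∈ Ico 1 n, (1 - ζ ^ k) = n := by
  obtain ⟨n, rfl⟩ := Nat.exists_eq_add_of_lt hn
  rw [prod_Ico_eq_prod_range]
  simpa [add_comm 1] using hζ.prod_one_sub_pow_eq_order

end IsPrimitiveRoot

theorem Polynomial.X_add_one_sub_C_mul_X_sub_one {R : Type*} [CommRing R] {u c : R}
    (h : 1 + u = (1 - u) * c) : X + 1 - C u * (X - 1) = C (1 - u) * (X + C c) := by
  rw [mul_add, ← C_mul, ← h]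
  simp only [map_sub, map_add, map_one]
  ring

namespace Complex

theorem one_add_exp_eq_one_sub_exp_mul_I_cot {z : ℂ} (h : exp (2 * I * z) ≠ 1) :
    1 + exp (2 * I * z) = (1 - exp (2 * I * z)) * (I * cot z) := by
  rw [cot_eq_exp_ratio]
  field_simp [sub_ne_zero.mpr h.symm]
  ring

theorem exp_two_pi_I_div_pow (n m : ℕ) :
    exp (2 * π * I / n) ^ m = exp (2 * I * (m * π / n)) := by
  rw [← exp_nat_mul]
  ring_nf

end Complex

/-- For `n ≥ 1`, `((x+1)ⁿ - (x-1)ⁿ)/2 = n·∏_{m=1}^{n-1} (x + i·cot(mπ/n))` in `ℂ[x]`. -/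
theorem stmt8 (n : ℕ) (hn : 1 ≤ n) :
    (X + 1 : Polynomial ℂ) ^ n - (X - 1) ^ n =
      2 * (n : Polynomial ℂ) * ∏ m ∈ Finset.Icc 1 (n - 1),
        (X + C (Complex.I * Complex.ofReal
          (Real.cos ((m : ℝ) * Real.pi / n) / Real.sin ((m : ℝ) * Real.pi / n)))) := by
  set ω := exp (2 * π * I / n)
  have hω : IsPrimitiveRoot ω n := isPrimitiveRoot_exp n (by omega)
  have hfactor : ∀ m ∈ Ico 1 n, X + 1 - C ω ^ m * (X - 1) =
      C (1 - ω ^ m) * (X + C (I * ↑(Real.cos (m * π / n) / Real.sin (m * π / n)))) := by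
    intro m hm
    obtain ⟨hm1, hmn⟩ := mem_Ico.mp hm
    rw [← map_pow]
    apply X_add_one_sub_C_mul_X_sub_one
    rw [← Real.cot_eq_cos_div_sin, ofReal_cot, exp_two_pi_I_div_pow]
    push_cast
    exact one_add_exp_eq_one_sub_exp_mul_I_cot
      (exp_two_pi_I_div_pow n m ▸ hω.pow_ne_one_of_pos_of_lt (by omega) hmn)
  rw [Icc_sub_one_right_eq_Ico_of_not_isMin (by simp; omega),
    (hω.map_of_injective C_injective).pow_sub_pow_eq_prod_range hn, prod_range_eq_mul_Ico _ hn,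
    prod_congr rfl hfactor, prod_mul_distrib, ← map_prod, hω.prod_Ico_one_sub_pow hn,
    pow_zero, map_natCast]
  ring
end

section
/- Write (√(1+4x²)+1)/2 for the formal power series c(x) with c(0) = 1 and (2c(x) − 1)² = 1 + 4x². Then for every n ≥ 0, the n-th power satisfies: c(x)^n = (x^n·L_n(1/x) + x^n·F_n(1/x))/2 + (x^{n−1}·F_n(1/x)·(√(1+4x²) − x))/2, where x^n L_n(1/x) and x^n F_n(1/x) denote the reversed Lucas and Fibonacci polynomials. Equivalently, expanding (1+x)^n via the substitution x ↦ x(1+x): (1+x)^n evaluated through the Fibonacci matrix (1, x(1+x)) applied to c(x)^n recovers (1+x)^n. -/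
/-!
Both sides, as sequences in `n`, satisfy `aₙ₊₂ = aₙ₊₁ + x² aₙ` and agree at `n = 0, 1`. For `cⁿ`
this is `c² = c + x²`, i.e. `(2c - 1)² = 1 + 4x²` divided by 4. On the right it comes from
reversing `Pₙ₊₂ = X Pₙ₊₁ + Pₙ` at the nominal degrees `n + 2, n + 1, n`: the factor `X` is
absorbed by the drop of nominal degree by one, and the drop by two contributes `x²`.
-/

open PowerSeries

namespace Polynomial

variable {R : Type*} [Semiring R]

theorem reflect_succ_X_mul {p : R[X]} {N : ℕ} (h : p.natDegree ≤ N) :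
    reflect (N + 1) (X * p) = reflect N p := by
  simpa [add_comm] using reflect_mul X p natDegree_X_le h

theorem reflect_add_two {p : R[X]} {N : ℕ} (h : p.natDegree ≤ N) :
    reflect (N + 2) p = X ^ 2 * reflect N p := by
  simpa [add_comm, reflect_one] using reflect_mul (1 : R[X]) p (F := 2) (by simp) h

section FibonacciRecurrence

variable {P : ℕ → R[X]} (hrec : ∀ n, P (n + 2) = X * P (n + 1) + P n)
include hrec

theorem natDegree_le_of_fibonacci_recurrence (h0 : (P 0).natDegree = 0)
    (h1 : (P 1).natDegree ≤ 1) (n : ℕ) : (P n).natDegree ≤ n := by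
  induction n using Nat.twoStepInduction with
  | zero => exact h0.le
  | one => exact h1
  | more n ih0 ih1 =>
    rw [hrec]
    exact natDegree_add_le_of_degree_le
      ((natDegree_mul_le_of_le natDegree_X_le ih1).trans_eq (by ring)) (by omega)

theorem reflect_fibonacci_recurrence (h0 : (P 0).natDegree = 0) (h1 : (P 1).natDegree ≤ 1)
    (n : ℕ) :
    reflect (n + 2) (P (n + 2)) = reflect (n + 1) (P (n + 1)) + X ^ 2 * reflect n (P n) := by
  have hdeg := natDegree_le_of_fibonacci_recurrence hrec h0 h1
  rw [hrec, reflect_add, reflect_succ_X_mul (hdeg _), reflect_add_two (hdeg _)]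

theorem reflect_pred_fibonacci_recurrence (h0 : P 0 = 0) (h1 : (P 1).natDegree = 0) (n : ℕ) :
    reflect (n + 2 - 1) (P (n + 2)) =
      reflect (n + 1 - 1) (P (n + 1)) + X ^ 2 * reflect (n - 1) (P n) := by
  cases n with
  | zero => simp [hrec 0, h0, reflect_succ_X_mul h1.le]
  | succ n =>
    have h2 : (P 2).natDegree ≤ 1 := by
      rw [hrec, h0, add_zero]
      exact natDegree_mul_le_of_le natDegree_X_le h1.le
    exact reflect_fibonacci_recurrence (P := fun n => P (n + 1)) (fun n => hrec (n + 1)) h1 h2 n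

end FibonacciRecurrence

end Polynomial

theorem eq_of_fibonacci_type_recurrence {A : Type*} [Semiring A] (s : A) {u v : ℕ → A}
    (hu : ∀ n, u (n + 2) = u (n + 1) + s * u n) (hv : ∀ n, v (n + 2) = v (n + 1) + s * v n)
    (h0 : u 0 = v 0) (h1 : u 1 = v 1) (n : ℕ) : u n = v n := by
  induction n using Nat.twoStepInduction with
  | zero => exact h0
  | one => exact h1
  | more n ih0 ih1 => rw [hu, hv, ih0, ih1]

theorem sq_eq_add_sq_of_two_mul_sub_one_sq {A : Type*} [CommRing A] (h2 : IsUnit (2 : A))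
    {c x : A} (h : (2 * c - 1) ^ 2 = 1 + 4 * x ^ 2) : c ^ 2 = c + x ^ 2 := by
  have h4 : (2 * 2 : A) * (c ^ 2 - (c + x ^ 2)) = 0 := by linear_combination h
  exact sub_eq_zero.1 <| (h2.mul h2).mul_right_eq_zero.1 h4

theorem stmt13_general (L F : ℕ → Polynomial ℝ)
    (hL0 : L 0 = 2) (hL1 : L 1 = Polynomial.X)
    (hLrec : ∀ n : ℕ, L (n + 2) = Polynomial.X * L (n + 1) + L n)
    (hF0 : F 0 = 0) (hF1 : F 1 = 1)
    (hFrec : ∀ n : ℕ, F (n + 2) = Polynomial.X * F (n + 1) + F n)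
    (c : PowerSeries ℝ)
    (hc : (2 * c - 1) ^ 2 = 1 + 4 * X ^ 2) :
    ∀ n : ℕ,
      c ^ n = (1 / 2 : ℝ) •
          (((Polynomial.reflect n (L n) : Polynomial ℝ) : PowerSeries ℝ)
            + ((Polynomial.reflect n (F n) : Polynomial ℝ) : PowerSeries ℝ))
        + (1 / 2 : ℝ) •
          (((Polynomial.reflect (n - 1) (F n) : Polynomial ℝ) : PowerSeries ℝ)
            * (2 * c - 1 - X)) := by
  have hc2 := sq_eq_add_sq_of_two_mul_sub_one_sq
    ((isUnit_of_invertible (2 : ℝ)).map (algebraMap ℝ ℝ⟦X⟧)) hc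
  have hL := Polynomial.reflect_fibonacci_recurrence hLrec (by simp [hL0]) (by simp [hL1])
  have hF := Polynomial.reflect_fibonacci_recurrence hFrec (by simp [hF0]) (by simp [hF1])
  have hFpred := Polynomial.reflect_pred_fibonacci_recurrence hFrec hF0 (by simp [hF1])
  refine eq_of_fibonacci_type_recurrence (X ^ 2) (fun n => ?_) (fun n => ?_) ?_ ?_
  · linear_combination c ^ n * hc2
  · simp only [hL n, hF n, hFpred n, Polynomial.coe_add, Polynomial.coe_mul, Polynomial.coe_pow,
      Polynomial.coe_X, smul_eq_C_mul]
    ring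
  · simp [hL0, hF0, ← Polynomial.C_ofNat, Polynomial.reflect_C, smul_eq_C_mul, ← map_mul]
  · have half_mul_two : (C 2⁻¹ * 2 : ℝ⟦X⟧) = 1 := by
      rw [← map_ofNat C 2, ← map_mul, inv_mul_cancel₀ two_ne_zero, map_one]
    simp only [pow_one, hL1, hF1, Nat.sub_self, Polynomial.reflect_one_X, Polynomial.reflect_one,
      pow_zero, Polynomial.coe_one, Polynomial.coe_X, smul_eq_C_mul, one_div, one_mul]
    linear_combination -c * half_mul_two

/-- For `c(x) = (1 + √(1+4x²))/2` (formal square root with constant term 1) and the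
Lucas and Fibonacci polynomials `L`, `F`, for every `n ≥ 0`:
`cⁿ = (xⁿL_n(1/x) + xⁿF_n(1/x))/2 + x^{n-1}F_n(1/x)·(√(1+4x²) - x)/2`, where the
reversed polynomials are expressed via `Polynomial.reflect` and `√(1+4x²) = 2c - 1`. -/
theorem stmt13 (L F : ℕ → Polynomial ℝ)
    (hL0 : L 0 = 2) (hL1 : L 1 = Polynomial.X)
    (hLrec : ∀ n : ℕ, L (n + 2) = Polynomial.X * L (n + 1) + L n)
    (hF0 : F 0 = 0) (hF1 : F 1 = 1)
    (hFrec : ∀ n : ℕ, F (n + 2) = Polynomial.X * F (n + 1) + F n)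
    (c : PowerSeries ℝ) (hc0 : constantCoeff c = 1)
    (hc : (2 * c - 1) ^ 2 = 1 + 4 * X ^ 2) :
    ∀ n : ℕ,
      c ^ n = (1 / 2 : ℝ) •
          (((Polynomial.reflect n (L n) : Polynomial ℝ) : PowerSeries ℝ)
            + ((Polynomial.reflect n (F n) : Polynomial ℝ) : PowerSeries ℝ))
        + (1 / 2 : ℝ) •
          (((Polynomial.reflect (n - 1) (F n) : Polynomial ℝ) : PowerSeries ℝ)
            * (2 * c - 1 - X)) :=
  stmt13_general L F hL0 hL1 hLrec hF0 hF1 hFrec c hc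
end

section
/- Let A and B be the infinite lower/upper triangular matrices whose even columns come from ((2+x)/(1+x), x²/(1+x)) resp. (1, x(1+x)) and odd columns from (x/(1+x), x²/(1+x)) resp. (1+2x, x(1+x)). Concretely: A x^{2n} = (2+x)/(1+x) · (x²/(1+x))^n, A x^{2n+1} = x/(1+x) · (x²/(1+x))^n (as power series), and B x^{2n} = x^n(1+x)^n, B x^{2n+1} = (1+2x)·x^n(1+x)^n (as polynomials, read as row/column generating functions). Then the pairing (A x^n | B x^m) := ∑_k [x^k](A x^n)·[x^k](B x^m) satisfies (A x^n | B x^m) = 2·δ_{n,m} for all n, m ≥ 0. -/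
/-!
The pairing `(a|c)` is the coefficient of `x^(deg c)` in `a · rev c`, where `rev c` is the
reversed polynomial. The reversals of `B x^(2b)` and `B x^(2b+1)` are `(1+x)^b` and
`(2+x)(1+x)^b`, while `A x^(2a+i) = x^(2a+i) · (2+x)^(1-i) / (1+x)^(a+1)`. If `n > m` the
product `A xⁿ · rev (B xᵐ)` starts beyond `xᵐ`; if `a < b` the denominator cancels and the
product is a polynomial of degree too small to reach `xᵐ`. What remains is `a = b`, `n ≤ m`:
the constant term `2` of `(2+x)/(1+x)` on the diagonal, and the vanishing `x`-coefficient of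
`(2+x)²/(1+x)` for `n = 2a`, `m = 2a+1`.
-/

open PowerSeries

noncomputable def coeffPairing {R : Type*} [CommSemiring R] (a : R⟦X⟧) (c : Polynomial R) : R :=
  ∑ k ∈ c.support, coeff k a * c.coeff k

theorem coeffPairing_eq_coeff_mul_reverse {R : Type*} [CommSemiring R] (a : R⟦X⟧)
    (c : Polynomial R) : coeffPairing a c = coeff c.natDegree (a * (c.reverse : R⟦X⟧)) := by
  rw [coeffPairing, ← Polynomial.sum_def,
    Polynomial.sum_over_range _ fun _ => mul_zero _, coeff_mul,
    Finset.Nat.sum_antidiagonal_eq_sum_range_succ (fun i j => coeff i a * coeff j _)]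
  refine Finset.sum_congr rfl fun k hk => ?_
  have hk : k ≤ c.natDegree := Nat.lt_succ_iff.mp (Finset.mem_range.mp hk)
  rw [Polynomial.coeff_coe, Polynomial.coeff_reverse, Polynomial.revAt_le (Nat.sub_le _ _),
    Nat.sub_sub_self hk]

namespace Polynomial

section Semiring
variable {R : Type*} [Semiring R]

@[simp, norm_cast]
theorem coe_ofNat (n : ℕ) [n.AtLeastTwo] : ((ofNat(n) : R[X]) : R⟦X⟧) = ofNat(n) :=
  map_ofNat coeToPowerSeries.ringHom n

theorem reverse_pow [NoZeroDivisors R] (f : R[X]) (n : ℕ) : (f ^ n).reverse = f.reverse ^ n := by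
  induction n with
  | zero => rw [pow_zero, pow_zero, ← C_1, reverse_C]
  | succ n ih => rw [pow_succ, reverse_mul_of_domain, ih, pow_succ]

theorem reverse_X : (X : R[X]).reverse = 1 := by
  have h := reverse_X_mul (1 : R[X])
  rwa [mul_one, ← C_1, reverse_C, C_1] at h

theorem reverse_one_add_X [Nontrivial R] : (1 + X : R[X]).reverse = 1 + X := by
  rw [← C_1, reverse_C_add, natDegree_X, reverse_X, C_1, pow_one, one_mul, add_comm]

theorem reverse_one_add_two_mul_X [NeZero (2 : R)] : (1 + 2 * X : R[X]).reverse = 2 + X := by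
  have := NeZero.nontrivial (2 : R)
  rw [← C_1, show (2 * X : R[X]) = X * C 2 by rw [← C_ofNat, X_mul_C], reverse_C_add,
    reverse_X_mul, reverse_C, natDegree_X_mul (C_ne_zero.2 two_ne_zero), natDegree_C, C_1,
    pow_one, one_mul, C_ofNat, add_comm]

theorem natDegree_X_mul_one_add_X_pow [Nontrivial R] (b : ℕ) :
    ((X * (1 + X)) ^ b : R[X]).natDegree = 2 * b := by
  compute_degree! <;> simp [mul_comm]

theorem natDegree_one_add_two_mul_X_mul [NeZero (2 : R)] (b : ℕ) :
    ((1 + 2 * X) * (X * (1 + X)) ^ b : R[X]).natDegree = 2 * b + 1 := by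
  have := NeZero.nontrivial (2 : R)
  compute_degree! <;> simp [mul_comm, add_comm, two_ne_zero]

end Semiring

section CommSemiring
variable {R : Type*} [CommSemiring R] [NoZeroDivisors R] [Nontrivial R]

theorem reverse_X_mul_one_add_X_pow (b : ℕ) :
    ((X * (1 + X)) ^ b : R[X]).reverse = (1 + X) ^ b := by
  rw [mul_pow, reverse_X_pow_mul, reverse_pow, reverse_one_add_X]

theorem reverse_one_add_two_mul_X_mul [NeZero (2 : R)] (b : ℕ) :
    ((1 + 2 * X) * (X * (1 + X)) ^ b : R[X]).reverse = (2 + X) * (1 + X) ^ b := by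
  rw [reverse_mul_of_domain, reverse_one_add_two_mul_X, reverse_X_mul_one_add_X_pow]

end CommSemiring

end Polynomial

namespace PowerSeries
variable {k : Type*} [Field k]

theorem one_add_X_pow_mul_inv_pow (a : ℕ) : (1 + X : k⟦X⟧) ^ a * (1 + X)⁻¹ ^ a = 1 := by
  rw [← mul_pow, PowerSeries.mul_inv_cancel _ (by simp), one_pow]

theorem inv_one_add_X : (1 + X : k⟦X⟧)⁻¹ = mk fun n => (-1) ^ n := by
  rw [inv_eq_iff_mul_eq_one (by simp)]
  ext (_ | n)
  · simp
  · simp [mul_add, coeff_succ_mul_X, pow_succ]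

theorem coeff_zero_two_add_X_mul_inv : coeff 0 ((2 + X) * (1 + X)⁻¹ : k⟦X⟧) = 2 := by
  simp [inv_one_add_X, map_ofNat]

theorem coeff_one_two_add_X_mul_two_add_X_mul_inv :
    coeff 1 ((2 + X) * (2 + X) * (1 + X)⁻¹ : k⟦X⟧) = 0 := by
  rw [← map_ofNat (C (R := k)) 2]
  simp [inv_one_add_X, coeff_mul, Finset.Nat.antidiagonal_succ, coeff_C]
  norm_num

theorem one_add_X_pow_mul_inv_pow_succ (a : ℕ) :
    (1 + X : k⟦X⟧) ^ a * (1 + X)⁻¹ ^ (a + 1) = (1 + X)⁻¹ := by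
  rw [pow_succ, ← mul_assoc, one_add_X_pow_mul_inv_pow, one_mul]

theorem coeff_X_pow_mul_one_add_X_pow_mul_inv_pow_of_le (q : Polynomial k) {s b c d N : ℕ}
    (hcb : c ≤ b) (hq : q.natDegree ≤ d) (hN : s + d + (b - c) < N) :
    coeff N (X ^ s * ((q : k⟦X⟧) * ((1 + X) ^ b * (1 + X)⁻¹ ^ c))) = 0 := by
  obtain ⟨t, rfl⟩ := exists_add_of_le hcb
  have hpoly : (X ^ s * ((q : k⟦X⟧) * (1 + X) ^ t) : k⟦X⟧)
      = ((Polynomial.X ^ s * (q * (1 + Polynomial.X) ^ t) : Polynomial k) : k⟦X⟧) := by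
    push_cast; rfl
  have hdeg : (Polynomial.X ^ s * (q * (1 + Polynomial.X) ^ t)).natDegree
      ≤ s + (q.natDegree + t) := by
    compute_degree
  rw [pow_add, mul_right_comm, one_add_X_pow_mul_inv_pow, one_mul, hpoly, Polynomial.coeff_coe]
  exact Polynomial.coeff_eq_zero_of_natDegree_lt (by omega)

end PowerSeries

section FibonacciBases
open Polynomial (natDegree_X_mul_one_add_X_pow reverse_X_mul_one_add_X_pow
  natDegree_one_add_two_mul_X_mul reverse_one_add_two_mul_X_mul)
variable {k : Type*} [Field k]

theorem coeffPairing_even_even (a b : ℕ) :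
    coeffPairing ((2 + X) * (1 + X)⁻¹ * (X ^ 2 * (1 + X)⁻¹) ^ a : k⟦X⟧)
      ((Polynomial.X * (1 + Polynomial.X)) ^ b) = if a = b then 2 else 0 := by
  rw [coeffPairing_eq_coeff_mul_reverse, natDegree_X_mul_one_add_X_pow,
    reverse_X_mul_one_add_X_pow, show _ * (((1 + Polynomial.X) ^ b : Polynomial k) : k⟦X⟧)
      = X ^ (2 * a) * (((2 + Polynomial.X : Polynomial k) : k⟦X⟧)
        * ((1 + X) ^ b * (1 + X)⁻¹ ^ (a + 1))) by push_cast; ring]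
  rcases lt_trichotomy a b with h | rfl | h
  · rw [coeff_X_pow_mul_one_add_X_pow_mul_inv_pow_of_le _ h (d := 1) (by compute_degree)
      (by omega), if_neg h.ne]
  · rw [one_add_X_pow_mul_inv_pow_succ, coeff_X_pow_mul', if_pos le_rfl, Nat.sub_self, if_pos rfl]
    push_cast
    exact coeff_zero_two_add_X_mul_inv
  · rw [coeff_X_pow_mul', if_neg (by omega), if_neg h.ne']

theorem coeffPairing_even_odd [NeZero (2 : k)] (a b : ℕ) :
    coeffPairing ((2 + X) * (1 + X)⁻¹ * (X ^ 2 * (1 + X)⁻¹) ^ a : k⟦X⟧)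
      ((1 + 2 * Polynomial.X) * (Polynomial.X * (1 + Polynomial.X)) ^ b) = 0 := by
  rw [coeffPairing_eq_coeff_mul_reverse, natDegree_one_add_two_mul_X_mul,
    reverse_one_add_two_mul_X_mul,
    show _ * (((2 + Polynomial.X) * (1 + Polynomial.X) ^ b : Polynomial k) : k⟦X⟧)
      = X ^ (2 * a) * ((((2 + Polynomial.X) * (2 + Polynomial.X) : Polynomial k) : k⟦X⟧)
        * ((1 + X) ^ b * (1 + X)⁻¹ ^ (a + 1))) by push_cast; ring]
  rcases lt_trichotomy a b with h | rfl | h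
  · exact coeff_X_pow_mul_one_add_X_pow_mul_inv_pow_of_le _ h (d := 2) (by compute_degree)
      (by omega)
  · rw [one_add_X_pow_mul_inv_pow_succ, coeff_X_pow_mul', if_pos (by omega),
      show 2 * a + 1 - 2 * a = 1 by omega]
    push_cast
    exact coeff_one_two_add_X_mul_two_add_X_mul_inv
  · rw [coeff_X_pow_mul', if_neg (by omega)]

theorem coeffPairing_odd_even (a b : ℕ) :
    coeffPairing (X * (1 + X)⁻¹ * (X ^ 2 * (1 + X)⁻¹) ^ a : k⟦X⟧)
      ((Polynomial.X * (1 + Polynomial.X)) ^ b) = 0 := by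
  rw [coeffPairing_eq_coeff_mul_reverse, natDegree_X_mul_one_add_X_pow,
    reverse_X_mul_one_add_X_pow, show _ * (((1 + Polynomial.X) ^ b : Polynomial k) : k⟦X⟧)
      = X ^ (2 * a + 1) * (((1 : Polynomial k) : k⟦X⟧)
        * ((1 + X) ^ b * (1 + X)⁻¹ ^ (a + 1))) by push_cast; ring]
  rcases lt_or_ge a b with h | h
  · exact coeff_X_pow_mul_one_add_X_pow_mul_inv_pow_of_le _ h (d := 0) (by compute_degree)
      (by omega)
  · rw [coeff_X_pow_mul', if_neg (by omega)]

theorem coeffPairing_odd_odd [NeZero (2 : k)] (a b : ℕ) :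
    coeffPairing (X * (1 + X)⁻¹ * (X ^ 2 * (1 + X)⁻¹) ^ a : k⟦X⟧)
      ((1 + 2 * Polynomial.X) * (Polynomial.X * (1 + Polynomial.X)) ^ b)
      = if a = b then 2 else 0 := by
  rw [coeffPairing_eq_coeff_mul_reverse, natDegree_one_add_two_mul_X_mul,
    reverse_one_add_two_mul_X_mul,
    show _ * (((2 + Polynomial.X) * (1 + Polynomial.X) ^ b : Polynomial k) : k⟦X⟧)
      = X ^ (2 * a + 1) * (((2 + Polynomial.X : Polynomial k) : k⟦X⟧)
        * ((1 + X) ^ b * (1 + X)⁻¹ ^ (a + 1))) by push_cast; ring]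
  rcases lt_trichotomy a b with h | rfl | h
  · rw [coeff_X_pow_mul_one_add_X_pow_mul_inv_pow_of_le _ h (d := 1) (by compute_degree)
      (by omega), if_neg h.ne]
  · rw [one_add_X_pow_mul_inv_pow_succ, coeff_X_pow_mul', if_pos le_rfl, Nat.sub_self, if_pos rfl]
    push_cast
    exact coeff_zero_two_add_X_mul_inv
  · rw [coeff_X_pow_mul', if_neg (by omega), if_neg h.ne']

end FibonacciBases

/-- Biorthogonality of the Fibonacci bases: with
`A x^{2n} = (2+x)/(1+x)·(x²/(1+x))ⁿ`, `A x^{2n+1} = x/(1+x)·(x²/(1+x))ⁿ`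
(formal power series over ℚ) and
`B x^{2n} = (x(1+x))ⁿ`, `B x^{2n+1} = (1+2x)(x(1+x))ⁿ` (polynomials),
the pairing `(a|c) = ∑ₖ aₖcₖ` satisfies `(A xⁿ | B xᵐ) = 2δₙₘ`. -/
theorem stmt18 (A : ℕ → PowerSeries ℚ) (B : ℕ → Polynomial ℚ)
    (hA0 : ∀ n : ℕ, A (2 * n) = (2 + X) * (1 + X)⁻¹ * (X ^ 2 * (1 + X)⁻¹) ^ n)
    (hA1 : ∀ n : ℕ, A (2 * n + 1) = X * (1 + X)⁻¹ * (X ^ 2 * (1 + X)⁻¹) ^ n)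
    (hB0 : ∀ n : ℕ, B (2 * n) = (Polynomial.X * (1 + Polynomial.X)) ^ n)
    (hB1 : ∀ n : ℕ, B (2 * n + 1)
      = (1 + 2 * Polynomial.X) * (Polynomial.X * (1 + Polynomial.X)) ^ n) :
    ∀ n m : ℕ,
      (∑ k ∈ (B m).support, coeff k (A n) * (B m).coeff k)
        = if n = m then 2 else 0 := by
  intro n m
  change coeffPairing (A n) (B m) = _
  obtain ⟨a, rfl | rfl⟩ := Nat.even_or_odd' n <;>
    obtain ⟨b, rfl | rfl⟩ := Nat.even_or_odd' m
  · rw [hA0, hB0, coeffPairing_even_even]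
    simp
  · rw [hA0, hB1, coeffPairing_even_odd, if_neg (by omega)]
  · rw [hA1, hB0, coeffPairing_odd_even, if_neg (by omega)]
  · rw [hA1, hB1, coeffPairing_odd_odd]
    simp
end

section
/- For parameters φ, β define B_{(φ,β)} x^{2n} = (β + φx + x²)^n and B_{(φ,β)} x^{2n+1} = (φ/2 + x)(β + φx + x²)^n (polynomials), and A_{(φ,β)} x^{2n} = (1 + (φ/2)x)·x^{2n}/(1+φx+βx²)^{n+1}, A_{(φ,β)} x^{2n+1} = x^{2n+1}/(1+φx+βx²)^{n+1} (formal power series). Then the pairing (a|c) = ∑_k a_k c_k satisfies (A_{(φ,β)} x^n | B_{(φ,β)} x^m) = δ_{n,m} for all n, m ≥ 0. -/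
/-!
For a polynomial `p` of degree at most `d`, the pairing `(a | p)` is the coefficient of `x^d` in
`a · x^d p(1/x)`. Reversing `B xᵐ` at degree `m` gives `(1 + φx/2)^(m % 2) Q^(m / 2)` with
`Q = 1 + φx + βx²`, so
`A xⁿ · x^m B xᵐ(1/x) = xⁿ (1 + φx/2)^(1 - n % 2 + m % 2) Q^(m/2 - n/2 - 1)`.
Its coefficient of `x^m` vanishes for `n/2 < m/2` by degree and for `n > m` because of `xⁿ`;
in the remaining cases it is read off from `(1 + φx/2)/Q = 1 + O(x)` and
`(1 + φx/2)²/Q = 1 + O(x²)`.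
-/

open PowerSeries
open scoped Polynomial

namespace Polynomial

variable {R : Type*} [CommSemiring R]

theorem reflect_pow {f : R[X]} {N : ℕ} (hf : f.natDegree ≤ N) (n : ℕ) :
    (f ^ n).reflect (n * N) = f.reflect N ^ n := by
  induction n with
  | zero => simp [reflect_one]
  | succ n ih =>
    rw [pow_succ, Nat.succ_mul, reflect_mul _ _ (natDegree_pow_le_of_le n hf) hf, ih, pow_succ]

theorem sum_support_coeff_mul_coeff_eq_coeff_mul_reflect (f : R⟦X⟧) {p : R[X]} {d : ℕ}
    (hp : p.natDegree ≤ d) :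
    ∑ k ∈ p.support, PowerSeries.coeff k f * p.coeff k
      = PowerSeries.coeff d (f * (p.reflect d : R⟦X⟧)) := by
  rw [PowerSeries.coeff_mul, Finset.Nat.sum_antidiagonal_eq_sum_range_succ_mk]
  have hcoeff : ∀ k ∈ Finset.range (d + 1),
      PowerSeries.coeff k f * PowerSeries.coeff (d - k) (p.reflect d : R⟦X⟧)
        = PowerSeries.coeff k f * p.coeff k := fun k hk => by
    rw [coeff_coe, coeff_reflect, revAt_le (Nat.sub_le d k),
      Nat.sub_sub_self (Nat.lt_succ_iff.mp (Finset.mem_range.mp hk))]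
  rw [Finset.sum_congr rfl hcoeff]
  refine Finset.sum_subset (fun k hk => ?_) (fun k _ hk => ?_)
  · exact Finset.mem_range.mpr (Nat.lt_succ_of_le ((le_natDegree_of_mem_supp k hk).trans hp))
  · rw [notMem_support_iff.mp hk, mul_zero]

theorem natDegree_C_add_X_le (c : R) : (C c + X).natDegree ≤ 1 := by
  compute_degree

theorem natDegree_C_add_C_mul_X_add_X_sq_le (b c : R) :
    (C b + C c * X + X ^ 2).natDegree ≤ 2 := by
  compute_degree

theorem reflect_one_C_add_X (c : R) : (C c + X).reflect 1 = 1 + C c * X := by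
  rw [← pow_one (X : R[X])]
  simp only [reflect_add, reflect_C, reflect_monomial, revAt_le (le_refl 1)]
  ring

theorem reflect_two_C_add_C_mul_X_add_X_sq (b c : R) :
    (C b + C c * X + X ^ 2).reflect 2 = 1 + C c * X + C b * X ^ 2 := by
  rw [show (C c * X : R[X]) = C c * X ^ 1 by rw [pow_one]]
  simp only [reflect_add, reflect_C, reflect_C_mul_X_pow, reflect_monomial,
    revAt_le (by norm_num : 1 ≤ 2), revAt_le (le_refl 2)]
  ring

end Polynomial

namespace PowerSeries

variable {K : Type*} [Field K]

theorem inv_pow_mul_pow_of_le {Q : K⟦X⟧} (hQ : constantCoeff Q ≠ 0) {a b : ℕ} (h : a ≤ b) :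
    Q⁻¹ ^ a * Q ^ b = Q ^ (b - a) := by
  rw [← Nat.add_sub_of_le h, pow_add, ← mul_assoc, ← mul_pow, PowerSeries.inv_mul_cancel Q hQ,
    one_pow, one_mul, Nat.add_sub_cancel_left]

theorem coeff_X_pow_mul_mul_inv_pow_mul_pow {q P : K[X]} (hq : q.natDegree ≤ 2)
    (hq0 : q.coeff 0 ≠ 0) {n m : ℕ} (hP : P.natDegree + n % 2 ≤ 1 + m % 2) :
    coeff m (X ^ n * (P : K⟦X⟧) * (q : K⟦X⟧)⁻¹ ^ (n / 2 + 1) * (q : K⟦X⟧) ^ (m / 2)) =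
      if n / 2 = m / 2 ∧ n % 2 ≤ m % 2 then coeff (m % 2 - n % 2) ((P : K⟦X⟧) * (q : K⟦X⟧)⁻¹)
      else 0 := by
  have hQ : constantCoeff (q : K⟦X⟧) ≠ 0 := by simpa using hq0
  rcases lt_trichotomy (n / 2) (m / 2) with h | h | h
  · rw [if_neg (by omega), mul_assoc, inv_pow_mul_pow_of_le hQ h]
    set k := m / 2 - (n / 2 + 1)
    have hdeg : (Polynomial.X ^ n * P * q ^ k).natDegree < m := by
      have := (Polynomial.natDegree_mul_le (p := Polynomial.X ^ n * P) (q := q ^ k)).trans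
        (add_le_add (Polynomial.natDegree_mul_le.trans
          (add_le_add (Polynomial.natDegree_X_pow_le n) le_rfl))
          (Polynomial.natDegree_pow_le_of_le k hq))
      omega
    rw [show X ^ n * (P : K⟦X⟧) * (q : K⟦X⟧) ^ k = ((Polynomial.X ^ n * P * q ^ k : K[X]) : K⟦X⟧)
      by push_cast; rfl, Polynomial.coeff_coe, Polynomial.coeff_eq_zero_of_natDegree_lt hdeg]
  · rw [show X ^ n * (P : K⟦X⟧) * (q : K⟦X⟧)⁻¹ ^ (n / 2 + 1) * (q : K⟦X⟧) ^ (m / 2)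
        = X ^ n * ((P : K⟦X⟧) * (q : K⟦X⟧)⁻¹)
          * ((q : K⟦X⟧)⁻¹ ^ (n / 2) * (q : K⟦X⟧) ^ (m / 2)) by ring,
      inv_pow_mul_pow_of_le hQ h.le, h, Nat.sub_self, pow_zero, mul_one, coeff_X_pow_mul']
    by_cases hnm : n % 2 ≤ m % 2
    · rw [if_pos (by omega), if_pos ⟨by omega, hnm⟩, show m - n = m % 2 - n % 2 by omega]
    · rw [if_neg (by omega), if_neg (by omega)]
  · rw [if_neg (by omega), mul_assoc, mul_assoc, coeff_X_pow_mul', if_neg (by omega)]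

end PowerSeries

section Fibonacci

variable {K : Type*} [Field K] (φ β : K)

/-- `fibA φ β n` and `fibB φ β n` are `A_{(φ,β)} xⁿ` and `B_{(φ,β)} xⁿ`, written through
`n = 2 * (n / 2) + n % 2`. -/
noncomputable def fibA (n : ℕ) : K⟦X⟧ :=
  (1 + C (φ / 2) * X) ^ (1 - n % 2) * X ^ n * ((1 + C φ * X + C β * X ^ 2)⁻¹) ^ (n / 2 + 1)

noncomputable def fibB (n : ℕ) : K[X] :=
  (Polynomial.C (φ / 2) + Polynomial.X) ^ (n % 2)
    * (Polynomial.C β + Polynomial.C φ * Polynomial.X + Polynomial.X ^ 2) ^ (n / 2)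

theorem natDegree_fibB_le (n : ℕ) : (fibB φ β n).natDegree ≤ n := by
  have hlin := Polynomial.natDegree_C_add_X_le (φ / 2)
  have hquad := Polynomial.natDegree_C_add_C_mul_X_add_X_sq_le β φ
  have := Polynomial.natDegree_mul_le.trans (add_le_add
    (Polynomial.natDegree_pow_le_of_le (n % 2) hlin)
    (Polynomial.natDegree_pow_le_of_le (n / 2) hquad))
  rw [fibB]
  omega

theorem reflect_fibB (n : ℕ) :
    (fibB φ β n).reflect n
      = (1 + Polynomial.C (φ / 2) * Polynomial.X) ^ (n % 2)
          * (1 + Polynomial.C φ * Polynomial.X + Polynomial.C β * Polynomial.X ^ 2) ^ (n / 2) := by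
  have hlin := Polynomial.natDegree_C_add_X_le (φ / 2)
  have hquad := Polynomial.natDegree_C_add_C_mul_X_add_X_sq_le β φ
  have := Polynomial.reflect_mul _ _ (Polynomial.natDegree_pow_le_of_le (n % 2) hlin)
    (Polynomial.natDegree_pow_le_of_le (n / 2) hquad)
  rwa [show n % 2 * 1 + n / 2 * 2 = n by omega, Polynomial.reflect_pow hlin,
    Polynomial.reflect_pow hquad, Polynomial.reflect_one_C_add_X,
    Polynomial.reflect_two_C_add_C_mul_X_add_X_sq] at this

theorem constantCoeff_one_add_C_half_mul_X_pow_mul_inv (j : ℕ) :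
    constantCoeff ((1 + C (φ / 2) * X) ^ j * (1 + C φ * X + C β * X ^ 2)⁻¹) = 1 := by
  simp [constantCoeff_inv]

theorem one_add_C_half_mul_X_sq [NeZero (2 : K)] :
    (1 + C (φ / 2) * X) ^ 2 = 1 + C φ * X + C β * X ^ 2 + C ((φ / 2) ^ 2 - β) * X ^ 2 := by
  have hφ : (C φ : K⟦X⟧) = C (φ / 2) + C (φ / 2) := by
    rw [← map_add, add_halves]
  rw [hφ, map_sub, map_pow]
  ring

theorem coeff_one_one_add_C_half_mul_X_sq_mul_inv [NeZero (2 : K)] :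
    coeff 1 ((1 + C (φ / 2) * X) ^ 2 * (1 + C φ * X + C β * X ^ 2)⁻¹) = 0 := by
  rw [one_add_C_half_mul_X_sq, add_mul, PowerSeries.mul_inv_cancel _ (by simp), mul_comm (C _),
    mul_assoc, map_add, coeff_X_pow_mul', if_neg (by norm_num)]
  simp

theorem sum_coeff_fibA_mul_coeff_fibB [NeZero (2 : K)] (n m : ℕ) :
    ∑ k ∈ (fibB φ β m).support, coeff k (fibA φ β n) * (fibB φ β m).coeff k
      = if n = m then 1 else 0 := by
  set e : K[X] := 1 + Polynomial.C (φ / 2) * Polynomial.X with he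
  set q : K[X] := 1 + Polynomial.C φ * Polynomial.X + Polynomial.C β * Polynomial.X ^ 2 with hq
  have hprod : fibA φ β n * ((fibB φ β m).reflect m : K⟦X⟧)
      = X ^ n * ((e ^ (1 - n % 2 + m % 2) : K[X]) : K⟦X⟧)
          * (q : K⟦X⟧)⁻¹ ^ (n / 2 + 1) * (q : K⟦X⟧) ^ (m / 2) := by
    rw [reflect_fibB, fibA, pow_add, he, hq]
    push_cast
    ring
  have he_deg : (e ^ (1 - n % 2 + m % 2)).natDegree + n % 2 ≤ 1 + m % 2 := by
    have he1 : e.natDegree ≤ 1 := by rw [he]; compute_degree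
    have := Polynomial.natDegree_pow_le_of_le (1 - n % 2 + m % 2) he1
    omega
  rw [Polynomial.sum_support_coeff_mul_coeff_eq_coeff_mul_reflect _ (natDegree_fibB_le φ β m),
    hprod,
    coeff_X_pow_mul_mul_inv_pow_mul_pow (by rw [hq]; compute_degree) (by simp [hq]) he_deg]
  split_ifs with hdiv hnm hnm
  · rw [show m % 2 - n % 2 = 0 by omega, coeff_zero_eq_constantCoeff, he, hq]
    push_cast
    exact constantCoeff_one_add_C_half_mul_X_pow_mul_inv φ β _
  · rw [show m % 2 - n % 2 = 1 by omega, show 1 - n % 2 + m % 2 = 2 by omega, he, hq]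
    push_cast
    exact coeff_one_one_add_C_half_mul_X_sq_mul_inv φ β
  · omega
  · rfl

end Fibonacci

/-- Biorthogonality of the generalized Fibonacci bases: with
`A_{(φ,β)} x^{2n} = (1+(φ/2)x)·x^{2n}/(1+φx+βx²)^{n+1}`,
`A_{(φ,β)} x^{2n+1} = x^{2n+1}/(1+φx+βx²)^{n+1}` (power series over ℚ) and
`B_{(φ,β)} x^{2n} = (β+φx+x²)ⁿ`, `B_{(φ,β)} x^{2n+1} = (φ/2+x)(β+φx+x²)ⁿ`
(polynomials), the pairing `(a|c) = ∑ₖ aₖcₖ` satisfies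
`(A_{(φ,β)} xⁿ | B_{(φ,β)} xᵐ) = δₙₘ`. -/
theorem stmt19 (φ β : ℚ) (A : ℕ → PowerSeries ℚ) (B : ℕ → Polynomial ℚ)
    (hA0 : ∀ n : ℕ, A (2 * n)
      = (1 + C (φ / 2) * X) * X ^ (2 * n)
          * ((1 + C φ * X + C β * X ^ 2)⁻¹) ^ (n + 1))
    (hA1 : ∀ n : ℕ, A (2 * n + 1)
      = X ^ (2 * n + 1) * ((1 + C φ * X + C β * X ^ 2)⁻¹) ^ (n + 1))
    (hB0 : ∀ n : ℕ, B (2 * n)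
      = (Polynomial.C β + Polynomial.C φ * Polynomial.X + Polynomial.X ^ 2) ^ n)
    (hB1 : ∀ n : ℕ, B (2 * n + 1)
      = (Polynomial.C (φ / 2) + Polynomial.X)
          * (Polynomial.C β + Polynomial.C φ * Polynomial.X + Polynomial.X ^ 2) ^ n) :
    ∀ n m : ℕ,
      (∑ k ∈ (B m).support, coeff k (A n) * (B m).coeff k)
        = if n = m then 1 else 0 := by
  obtain rfl : A = fibA φ β := funext fun n => by
    obtain ⟨k, rfl | rfl⟩ := Nat.even_or_odd' n
    · rw [hA0, fibA, show 2 * k % 2 = 0 by omega, show 2 * k / 2 = k by omega, pow_one]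
    · rw [hA1, fibA, show (2 * k + 1) % 2 = 1 by omega, show (2 * k + 1) / 2 = k by omega,
        Nat.sub_self, pow_zero, one_mul]
  obtain rfl : B = fibB φ β := funext fun n => by
    obtain ⟨k, rfl | rfl⟩ := Nat.even_or_odd' n
    · rw [hB0, fibB, show 2 * k % 2 = 0 by omega, show 2 * k / 2 = k by omega, pow_zero, one_mul]
    · rw [hB1, fibB, show (2 * k + 1) % 2 = 1 by omega, show (2 * k + 1) / 2 = k by omega, pow_one]
  exact sum_coeff_fibA_mul_coeff_fibB φ β
end
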